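/- Let U(Y) = E[Y] be the mean functional on L¹ and let R be a risk functional that is positively star-shaped and satisfies the lower Fatou property. Then the 'Markowitz-type' problem sup{ E[X_π] : π ∈ ℝ^d, R(X_π) ≤ R̃ } admits a maximizer for every market X and every R̃ ∈ [0, ∞) if and only if R is sensitive to large losses; likewise, the supremum is finite (< ∞) for every market and every R̃ ∈ [0, ∞) if and only if R is sensitive to large losses. -/

import Mathlib

open MeasureTheory Filter
open scoped ENNReal

namespace URPaper

variable {Ω : Type*} [MeasurableSpace Ω]

/-- The payoff `π · X` of the portfolio `π` in the market `X`. -/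
def port {d : ℕ} (X : Fin d → Ω → ℝ) (π : Fin d → ℝ) : Ω → ℝ :=
  fun ω => ∑ i, π i * X i ω

/-- The scaled position `l • Y`. -/
def scale (l : ℝ) (Y : Ω → ℝ) : Ω → ℝ := fun ω => l * Y ω

/-- A functional is increasing (with respect to the a.s. order on `L¹`). -/
def MonoInc (μ : Measure Ω) (U : (Ω → ℝ) → EReal) : Prop :=
  ∀ Y Z : Ω → ℝ, Integrable Y μ → Integrable Z μ →
    (∀ᵐ ω ∂μ, Y ω ≤ Z ω) → U Y ≤ U Z

/-- A functional is decreasing (with respect to the a.s. order on `L¹`). -/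
def MonoDec (μ : Measure Ω) (R : (Ω → ℝ) → EReal) : Prop :=
  ∀ Y Z : Ω → ℝ, Integrable Y μ → Integrable Z μ →
    (∀ᵐ ω ∂μ, Y ω ≤ Z ω) → R Z ≤ R Y

/-- `U(∞)`: the limit of `U` along deterministic constants `y → ∞`
(equal to the supremum, since `U` is increasing along constants). -/
noncomputable def limConst (U : (Ω → ℝ) → EReal) : EReal := ⨆ y : ℝ, U (fun _ => y)

/-- A utility functional: increasing, normalized, `[-∞,∞)`-valued,
and satisfying `U(Y) < U(∞)` for all `Y ∈ L¹`. -/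
structure IsUtility (μ : Measure Ω) (U : (Ω → ℝ) → EReal) : Prop where
  mono : MonoInc μ U
  norm : U (fun _ => (0 : ℝ)) = 0
  ne_top : ∀ Y : Ω → ℝ, Integrable Y μ → U Y ≠ ⊤
  non_sat : ∀ Y : Ω → ℝ, Integrable Y μ → U Y < limConst U

/-- A risk functional: decreasing, normalized, `(-∞,∞]`-valued. -/
structure IsRisk (μ : Measure Ω) (R : (Ω → ℝ) → EReal) : Prop where
  mono : MonoDec μ R
  norm : R (fun _ => (0 : ℝ)) = 0
  ne_bot : ∀ Y : Ω → ℝ, Integrable Y μ → R Y ≠ ⊥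

/-- Positive star-shapedness: `R(λY) ≥ λ R(Y)` for `λ > 1`. -/
def PosStarShaped (μ : Measure Ω) (R : (Ω → ℝ) → EReal) : Prop :=
  ∀ Y : Ω → ℝ, Integrable Y μ → ∀ l : ℝ, 1 < l → (l : EReal) * R Y ≤ R (scale l Y)

/-- The lower Fatou property. -/
def LowerFatou (μ : Measure Ω) (R : (Ω → ℝ) → EReal) : Prop :=
  ∀ (Yn : ℕ → Ω → ℝ) (Y Z : Ω → ℝ), (∀ n, Integrable (Yn n) μ) →
    Integrable Y μ → Integrable Z μ →
    (∀ᵐ ω ∂μ, Tendsto (fun n => Yn n ω) atTop (nhds (Y ω))) →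
    (∀ n, ∀ᵐ ω ∂μ, |Yn n ω| ≤ Z ω) →
    R Y ≤ Filter.liminf (fun n => R (Yn n)) atTop

/-- The upper Fatou property. -/
def UpperFatou (μ : Measure Ω) (U : (Ω → ℝ) → EReal) : Prop :=
  ∀ (Yn : ℕ → Ω → ℝ) (Y Z : Ω → ℝ), (∀ n, Integrable (Yn n) μ) →
    Integrable Y μ → Integrable Z μ →
    (∀ᵐ ω ∂μ, Tendsto (fun n => Yn n ω) atTop (nhds (Y ω))) →
    (∀ n, ∀ᵐ ω ∂μ, |Yn n ω| ≤ Z ω) →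
    Filter.limsup (fun n => U (Yn n)) atTop ≤ U Y

/-- Sensitivity to large losses for a risk functional. -/
def SensLLRisk (μ : Measure Ω) (R : (Ω → ℝ) → EReal) : Prop :=
  ∀ Y : Ω → ℝ, Integrable Y μ → 0 < μ {ω | Y ω < 0} →
    ∃ l₀ : ℝ, 0 < l₀ ∧ ∀ l : ℝ, l₀ < l → 0 < R (scale l Y)

/-- Sensitivity to large losses for a utility functional. -/
def SensLLUtility (μ : Measure Ω) (U : (Ω → ℝ) → EReal) : Prop :=
  ∀ Y : Ω → ℝ, Integrable Y μ → 0 < μ {ω | Y ω < 0} →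
    ∃ l₀ : ℝ, 0 < l₀ ∧ ∀ l : ℝ, l₀ < l → U (scale l Y) < 0

/-- Weak sensitivity to large losses for a utility functional. -/
def WeakSensLLUtility (μ : Measure Ω) (U : (Ω → ℝ) → EReal) : Prop :=
  ∀ Y : Ω → ℝ, Integrable Y μ → 0 < μ {ω | Y ω < 0} →
    Filter.limsup (fun l : ℝ => U (scale l Y)) atTop < limConst U

/-- Sensitivity equivalence for a utility functional. -/
def SensEquivUtility (μ : Measure Ω) (U : (Ω → ℝ) → EReal) : Prop :=
  WeakSensLLUtility μ U ↔ SensLLUtility μ U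

/-- Law-invariance of a functional on `L¹`. -/
def LawInvariant (μ : Measure Ω) (H : (Ω → ℝ) → EReal) : Prop :=
  ∀ Y Z : Ω → ℝ, Integrable Y μ → Integrable Z μ →
    ProbabilityTheory.IdentDistrib Y Z μ μ → H Y = H Z

/-- Cash-additivity: `H(Y + c) = H(Y) + H(c)` for constants `c`. -/
def CashAdditive (μ : Measure Ω) (H : (Ω → ℝ) → EReal) : Prop :=
  ∀ Y : Ω → ℝ, Integrable Y μ → ∀ c : ℝ,
    H (fun ω => Y ω + c) = H Y + H (fun _ => c)

/-- Cash-convexity of a risk functional. -/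
def CashConvex (μ : Measure Ω) (R : (Ω → ℝ) → EReal) : Prop :=
  ∀ Y : Ω → ℝ, Integrable Y μ → ∀ c l : ℝ, 0 < l → l < 1 →
    R (fun ω => l * Y ω + (1 - l) * c) ≤
      (l : EReal) * R Y + ((1 - l : ℝ) : EReal) * R (fun _ => c)

/-- Cash-concavity of a utility functional. -/
def CashConcave (μ : Measure Ω) (U : (Ω → ℝ) → EReal) : Prop :=
  ∀ Y : Ω → ℝ, Integrable Y μ → ∀ c l : ℝ, 0 < l → l < 1 →
    (l : EReal) * U Y + ((1 - l : ℝ) : EReal) * U (fun _ => c) ≤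
      U (fun ω => l * Y ω + (1 - l) * c)

/-- Strict quasi-concavity of a utility functional. -/
def StrictQuasiConcave (μ : Measure Ω) (U : (Ω → ℝ) → EReal) : Prop :=
  ∀ Y Z : Ω → ℝ, Integrable Y μ → Integrable Z μ → 0 < μ {ω | Y ω ≠ Z ω} →
    ∀ l : ℝ, 0 < l → l < 1 →
      min (U Y) (U Z) < U (fun ω => l * Y ω + (1 - l) * Z ω)

/-- Quasi-convexity of a risk functional. -/
def QuasiConvex (μ : Measure Ω) (R : (Ω → ℝ) → EReal) : Prop :=
  ∀ Y Z : Ω → ℝ, Integrable Y μ → Integrable Z μ → ∀ l : ℝ, 0 < l → l < 1 →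
    R (fun ω => l * Y ω + (1 - l) * Z ω) ≤ max (R Y) (R Z)

/-- An atomless measure. -/
def Atomless (μ : Measure Ω) : Prop :=
  ∀ s : Set Ω, MeasurableSet s → μ s ≠ 0 →
    ∃ t : Set Ω, t ⊆ s ∧ MeasurableSet t ∧ 0 < μ t ∧ μ t < μ s

/-- A market: a finite tuple of integrable payoffs, non-redundant
(linearly independent in `L¹`) and arbitrage-free. -/
structure IsMarket (μ : Measure Ω) {d : ℕ} (X : Fin d → Ω → ℝ) : Prop where
  integrable : ∀ i, Integrable (X i) μ
  nonredundant : ∀ π : Fin d → ℝ, (∀ᵐ ω ∂μ, port X π ω = 0) → π = 0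
  no_arbitrage : ¬∃ π : Fin d → ℝ,
      (∀ᵐ ω ∂μ, 0 ≤ port X π ω) ∧ 0 < μ {ω | 0 < port X π ω}

/-- `(U,R)`-portfolio selection is weakly well posed for the market `X`. -/
def WeaklyWellPosedFor (U R : (Ω → ℝ) → EReal) {d : ℕ} (X : Fin d → Ω → ℝ) : Prop :=
  ∀ Rmax : ℝ, 0 ≤ Rmax →
    (⨆ π : {π : Fin d → ℝ // R (port X π) ≤ (Rmax : EReal)}, U (port X π.1)) < limConst U

/-- `(U,R)`-portfolio selection is well posed for the market `X`:
the supremum is attained by some portfolio. -/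
def WellPosedFor (U R : (Ω → ℝ) → EReal) {d : ℕ} (X : Fin d → Ω → ℝ) : Prop :=
  ∀ Rmax : ℝ, 0 ≤ Rmax →
    ∃ πs : Fin d → ℝ, R (port X πs) ≤ (Rmax : EReal) ∧
      ∀ π : Fin d → ℝ, R (port X π) ≤ (Rmax : EReal) → U (port X π) ≤ U (port X πs)

/-- Market-independent weak well-posedness. -/
def MIWeaklyWellPosed (μ : Measure Ω) (U R : (Ω → ℝ) → EReal) : Prop :=
  ∀ (d : ℕ), 0 < d → ∀ X : Fin d → Ω → ℝ, IsMarket μ X → WeaklyWellPosedFor U R X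

/-- Market-independent well-posedness. -/
def MIWellPosed (μ : Measure Ω) (U R : (Ω → ℝ) → EReal) : Prop :=
  ∀ (d : ℕ), 0 < d → ∀ X : Fin d → Ω → ℝ, IsMarket μ X → WellPosedFor U R X

/-- The market `X` admits `(U,R)`-arbitrage. -/
def URArbitrage (U R : (Ω → ℝ) → EReal) {d : ℕ} (X : Fin d → Ω → ℝ) : Prop :=
  ∃ (π : ℕ → Fin d → ℝ) (Rt : ℝ), 0 ≤ Rt ∧
    Tendsto (fun n => U (port X (π n))) atTop (nhds (limConst U)) ∧
    ∀ n, R (port X (π n)) ≤ (Rt : EReal)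

/-- The terminal payoff `θ · S̄₁` of a portfolio `θ` in a normalized market model
with interest rate `r` and risky payoffs `S`. -/
def mmPayoff {d : ℕ} (r : ℝ) (S : Fin d → Ω → ℝ) (θ : Fin (d + 1) → ℝ) : Ω → ℝ :=
  fun ω => θ 0 * (1 + r) + ∑ i : Fin d, θ i.succ * S i ω

/-- A normalized, arbitrage-free and non-redundant market model with `d` risky assets:
all initial prices are `1`, asset `0` is riskless with payoff `1 + r`. -/
structure MarketModel (μ : Measure Ω) (d : ℕ) where
  r : ℝ
  hr : -1 < r
  S : Fin d → Ω → ℝ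
  integrable : ∀ i, Integrable (S i) μ
  nonredundant : ∀ θ : Fin (d + 1) → ℝ, (∀ᵐ ω ∂μ, mmPayoff r S θ ω = 0) → θ = 0
  no_arbitrage : ¬∃ θ : Fin (d + 1) → ℝ, (∑ j, θ j) ≤ 0 ∧
    (∀ᵐ ω ∂μ, 0 ≤ mmPayoff r S θ ω) ∧ 0 < μ {ω | 0 < mmPayoff r S θ ω}

/-- The terminal payoff `θ · S̄₁`. -/
def payoff {μ : Measure Ω} {d : ℕ} (M : MarketModel μ d) (θ : Fin (d + 1) → ℝ) : Ω → ℝ :=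
  mmPayoff M.r M.S θ

/-- The initial cost `θ · S̄₀` (all initial prices are normalized to `1`). -/
def cost {μ : Measure Ω} {d : ℕ} (_M : MarketModel μ d) (θ : Fin (d + 1) → ℝ) : ℝ :=
  ∑ j, θ j

/-- The positive part of an extended real number, as an element of `ℝ≥0∞`. -/
noncomputable def posPart (x : EReal) : ℝ≥0∞ :=
  if x = ⊤ then ⊤ else ENNReal.ofReal x.toReal

/-- The expected utility `E[u(Y)]` of a position `Y`, as an extended real number. -/
noncomputable def expEU (μ : Measure Ω) (u : ℝ → EReal) (Y : Ω → ℝ) : EReal :=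
  ((∫⁻ ω, posPart (u (Y ω)) ∂μ : ℝ≥0∞) : EReal) -
    ((∫⁻ ω, posPart (-(u (Y ω))) ∂μ : ℝ≥0∞) : EReal)

/-- A utility function: increasing, normalized, `[-∞,∞)`-valued, non-satiated
(`u(∞) > u(z)` for all `z`), and of at most linear growth at `+∞`
(`limsup_{y→∞} u(y)/y < ∞`). -/
structure IsUtilityFun (u : ℝ → EReal) : Prop where
  mono : Monotone u
  norm : u 0 = 0
  ne_top : ∀ y : ℝ, u y ≠ ⊤
  non_sat : ∀ z : ℝ, u z < ⨆ y : ℝ, u y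
  growth : ∃ a : ℝ, ∀ᶠ y in (atTop : Filter ℝ), u y ≤ ((a * y : ℝ) : EReal)

/-- `u` is unbounded (its range is not contained in any bounded interval of `ℝ`). -/
def UnboundedFun (u : ℝ → EReal) : Prop :=
  ¬∃ C : ℝ, ∀ y : ℝ, ((-C : ℝ) : EReal) ≤ u y ∧ u y ≤ ((C : ℝ) : EReal)

/-- `u` is negatively star-shaped on `ℝ₊`: `u(λy) ≤ λ u(y)` for `y ≥ 0`, `λ ≥ 1`. -/
def NegStarShapedPos (u : ℝ → EReal) : Prop :=
  ∀ y : ℝ, 0 ≤ y → ∀ l : ℝ, 1 ≤ l → u (l * y) ≤ (l : EReal) * u y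

/-- The asymptotic loss-gain ratio `ALG(u) = limsup_{y→∞} u(-y)/u(y)`. -/
noncomputable def ALG (u : ℝ → EReal) : EReal :=
  Filter.limsup (fun y : ℝ => u (-y) / u y) atTop

/-- Strict concavity of a `[-∞,∞)`-valued utility function. -/
def StrictConcaveFun (u : ℝ → EReal) : Prop :=
  ∀ y z : ℝ, y ≠ z → ∀ l : ℝ, 0 < l → l < 1 →
    (l : EReal) * u y + ((1 - l : ℝ) : EReal) * u z < u (l * y + (1 - l) * z)


lemma integrable_port {d : ℕ} {μ : Measure Ω} {X : Fin d → Ω → ℝ}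
    (hX : ∀ i, Integrable (X i) μ) (π : Fin d → ℝ) : Integrable (port X π) μ := by
  have h : Integrable (fun ω => ∑ i, π i * X i ω) μ := by simpa using integrable_finset_sum (μ := μ) Finset.univ (fun i _ => ((hX i).const_mul (π i)))
  exact h

lemma exists_W (μ : Measure Ω) [IsProbabilityMeasure μ] (hatomless : Atomless μ)
    (Y : Ω → ℝ) (hY : Integrable Y μ) (hneg : 0 < μ {ω | Y ω < 0}) :
    ∃ W : Ω → ℝ, Integrable W μ ∧ (∀ᵐ ω ∂μ, Y ω ≤ W ω) ∧ 0 < μ {ω | W ω < 0} ∧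
      0 < μ {ω | 0 < W ω} ∧ 0 < ∫ ω, W ω ∂μ := by
  classical
  set Y' := hY.1.mk Y with hY'def
  have hsm : StronglyMeasurable Y' := hY.1.stronglyMeasurable_mk
  have hae : Y =ᵐ[μ] Y' := hY.1.ae_eq_mk
  have hY'int : Integrable Y' μ := hY.congr hae
  set A := {ω | Y' ω < 0} with hAdef
  have hAmeas : MeasurableSet A := measurableSet_lt hsm.measurable measurable_const
  have hApos : 0 < μ A := by
    refine lt_of_lt_of_le hneg (measure_mono_ae ?_)
    filter_upwards [hae] with ω h hm
    show Y' ω < 0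
    rw [← h]; exact hm
  obtain ⟨B, hBA, hBmeas, hBpos, hBlt⟩ := hatomless A hAmeas (ne_of_gt hApos)
  have hBne : μ B ≠ ⊤ := measure_ne_top μ B
  have hcompl : 0 < μ Bᶜ := by
    have h1 : 0 < μ (A \ B) := by
      rw [measure_diff hBA hBmeas.nullMeasurableSet hBne]
      exact tsub_pos_iff_lt.mpr hBlt
    exact lt_of_lt_of_le h1 (measure_mono (Set.diff_subset_compl A B))
  set m := (μ Bᶜ).toReal with hmdef
  have hmpos : 0 < m := ENNReal.toReal_pos (ne_of_gt hcompl) (measure_ne_top μ _)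
  set I := ∫ ω, |Y' ω| ∂μ with hIdef
  have hInn : 0 ≤ I := integral_nonneg fun ω => abs_nonneg _
  set c := (I + 1) / m with hcdef
  have hcpos : 0 < c := div_pos (by linarith) hmpos
  set W : Ω → ℝ := fun ω => if ω ∈ B then Y' ω else max (Y' ω) c with hWdef
  have hWsm : StronglyMeasurable W :=
    StronglyMeasurable.ite hBmeas hsm
      ((hsm.measurable.max measurable_const).stronglyMeasurable)
  have hWbound : ∀ ω, |W ω| ≤ |Y' ω| + c := by
    intro ω
    by_cases h : ω ∈ B
    · simp only [W, if_pos h]; linarith [abs_nonneg (Y' ω)]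
    · simp only [W, if_neg h]
      rw [abs_of_pos (lt_of_lt_of_le hcpos (le_max_right _ _))]
      rcases max_cases (Y' ω) c with ⟨h1, _⟩ | ⟨h1, _⟩ <;> rw [h1]
      · linarith [le_abs_self (Y' ω)]
      · linarith [abs_nonneg (Y' ω)]
  have hWint : Integrable W μ := by
    refine Integrable.mono' (hY'int.abs.add (integrable_const c))
      hWsm.aestronglyMeasurable (Filter.Eventually.of_forall ?_)
    intro ω; simpa using hWbound ω
  have hYW : ∀ᵐ ω ∂μ, Y ω ≤ W ω := by
    filter_upwards [hae] with ω h
    by_cases hb : ω ∈ B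
    · simp [W, if_pos hb, h]
    · simp only [W, if_neg hb, h]; exact le_max_left _ _
  have hWneg : 0 < μ {ω | W ω < 0} := by
    refine lt_of_lt_of_le hBpos (measure_mono ?_)
    intro ω hb
    have : Y' ω < 0 := hBA hb
    simpa [W, if_pos hb] using this
  have hWposset : 0 < μ {ω | 0 < W ω} := by
    refine lt_of_lt_of_le hcompl (measure_mono ?_)
    intro ω hb
    have : c ≤ W ω := by simp only [W, if_neg hb]; exact le_max_right _ _
    exact lt_of_lt_of_le hcpos this
  have hsplit : ∫ ω in B, W ω ∂μ + ∫ ω in Bᶜ, W ω ∂μ = ∫ ω, W ω ∂μ :=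
    integral_add_compl hBmeas hWint
  have h1 : -I ≤ ∫ ω in B, W ω ∂μ := by
    have he : ∫ ω in B, W ω ∂μ = ∫ ω in B, Y' ω ∂μ :=
      setIntegral_congr_fun hBmeas (fun ω h => by simp [W, if_pos h])
    have h2 : |∫ ω in B, Y' ω ∂μ| ≤ ∫ ω in B, |Y' ω| ∂μ := by
      simpa using norm_integral_le_integral_norm (μ := μ.restrict B) Y'
    have h3 : ∫ ω in B, |Y' ω| ∂μ ≤ I :=
      setIntegral_le_integral hY'int.abs (Filter.Eventually.of_forall fun ω => abs_nonneg _)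
    rw [he]
    have := abs_le.mp (le_trans h2 h3)
    linarith [this.1]
  have h2 : c * m ≤ ∫ ω in Bᶜ, W ω ∂μ := by
    have hconst : ∫ _ω in Bᶜ, c ∂μ = m * c := by
      rw [setIntegral_const]; simp [m, smul_eq_mul, measureReal_def]
    calc c * m = ∫ _ω in Bᶜ, c ∂μ := by rw [hconst]; ring
    _ ≤ ∫ ω in Bᶜ, W ω ∂μ := by
        refine setIntegral_mono_on (integrable_const c).integrableOn
          hWint.integrableOn hBmeas.compl ?_
        intro ω hb
        simp only [W, if_neg hb]; exact le_max_right _ _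
  have hcm : c * m = I + 1 := by rw [hcdef]; field_simp
  refine ⟨W, hWint, hYW, hWneg, hWposset, ?_⟩
  have : -I + (I + 1) ≤ ∫ ω, W ω ∂μ := by
    rw [← hsplit, ← hcm]; exact add_le_add h1 h2
  linarith


lemma isMarket_single (μ : Measure Ω) {W : Ω → ℝ} (hWint : Integrable W μ)
    (hWneg : 0 < μ {ω | W ω < 0}) (hWpos : 0 < μ {ω | 0 < W ω}) :
    IsMarket μ (fun _ : Fin 1 => W) := by
  have hport : ∀ π : Fin 1 → ℝ, port (fun _ : Fin 1 => W) π = fun ω => π 0 * W ω := by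
    intro π; funext ω; simp [port, Fin.sum_univ_one]
  refine ⟨fun _ => hWint, ?_, ?_⟩
  · intro π hπ
    rw [hport] at hπ
    by_contra hne
    have ha : π 0 ≠ 0 := by
      intro h0; apply hne; funext i
      have : i = 0 := Subsingleton.elim _ _
      rw [this, h0]; rfl
    have hW0 : ∀ᵐ ω ∂μ, W ω = 0 := by
      filter_upwards [hπ] with ω h
      exact (mul_eq_zero.mp h).resolve_left ha
    have hnull : μ {ω | W ω < 0} = 0 := by
      refine measure_mono_null ?_ (ae_iff.mp hW0)
      intro ω h; exact ne_of_lt h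
    exact absurd hnull (ne_of_gt hWneg)
  · rintro ⟨π, hge, hpos⟩
    rw [hport] at hge hpos
    rcases lt_trichotomy (π 0) 0 with h | h | h
    · have hle : ∀ᵐ ω ∂μ, W ω ≤ 0 := by
        filter_upwards [hge] with ω hω
        by_contra hW; push_neg at hW
        nlinarith
      have h0 : μ {ω | 0 < W ω} = 0 := by
        refine measure_mono_null ?_ (ae_iff.mp hle)
        intro ω hω; exact not_le.mpr hω
      exact absurd h0 (ne_of_gt hWpos)
    · have hem : {ω | 0 < π 0 * W ω} = (∅ : Set Ω) := by
        ext ω; simp [h]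
      rw [hem] at hpos; simp at hpos
    · have hge' : ∀ᵐ ω ∂μ, 0 ≤ W ω := by
        filter_upwards [hge] with ω hω
        nlinarith
      have h0 : μ {ω | W ω < 0} = 0 := by
        refine measure_mono_null ?_ (ae_iff.mp hge')
        intro ω hω; exact not_le.mpr hω
      exact absurd h0 (ne_of_gt hWneg)

lemma scale_le_zero_of_not_sens (μ : Measure Ω) {R : (Ω → ℝ) → EReal}
    (hps : PosStarShaped μ R) {Y : Ω → ℝ} (hY : Integrable Y μ)
    (hc : ∀ l₀ : ℝ, 0 < l₀ → ∃ l, l₀ < l ∧ R (scale l Y) ≤ 0) :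
    ∀ l : ℝ, 1 ≤ l → R (scale l Y) ≤ 0 := by
  intro l hl
  obtain ⟨l', hll', hRl'⟩ := hc l (by linarith)
  have hl0 : (0:ℝ) < l := by linarith
  have hsc : scale l' Y = scale (l'/l) (scale l Y) := by
    funext ω; simp only [scale]
    field_simp
  have hone : 1 < l'/l := (one_lt_div hl0).mpr hll'
  have hstar := hps (scale l Y) (hY.const_mul l) (l'/l) hone
  rw [← hsc] at hstar
  by_contra hpos
  rw [not_le] at hpos
  have hmul : 0 < ((l'/l : ℝ) : EReal) * R (scale l Y) :=
    EReal.mul_pos (by exact_mod_cast lt_trans one_pos hone) hpos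
  exact absurd (le_trans hstar hRl') (not_le.mpr hmul)

lemma not_sens_bad_market (μ : Measure Ω) [IsProbabilityMeasure μ] (hatomless : Atomless μ)
    {R : (Ω → ℝ) → EReal} (hR : IsRisk μ R) (hps : PosStarShaped μ R)
    {Y : Ω → ℝ} (hY : Integrable Y μ) (hneg : 0 < μ {ω | Y ω < 0})
    (hc : ∀ l₀ : ℝ, 0 < l₀ → ∃ l, l₀ < l ∧ R (scale l Y) ≤ 0) :
    ∃ X : Fin 1 → Ω → ℝ, IsMarket μ X ∧ ∃ e : ℝ, 0 < e ∧
      ∀ n : ℕ, R (port X (fun _ => ((n:ℝ) + 1))) ≤ (0 : EReal) ∧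
        ∫ ω, port X (fun _ => ((n:ℝ) + 1)) ω ∂μ = ((n:ℝ) + 1) * e := by
  obtain ⟨W, hWint, hYW, hWneg, hWpos, hWmean⟩ := exists_W μ hatomless Y hY hneg
  have h0 := scale_le_zero_of_not_sens μ hps hY hc
  have hRW : ∀ l : ℝ, 1 ≤ l → R (scale l W) ≤ 0 := by
    intro l hl
    refine le_trans (hR.mono (scale l Y) (scale l W) (hY.const_mul l)
      (hWint.const_mul l) ?_) (h0 l hl)
    filter_upwards [hYW] with ω h
    exact mul_le_mul_of_nonneg_left h (by linarith)
  refine ⟨fun _ => W, isMarket_single μ hWint hWneg hWpos, ∫ ω, W ω ∂μ, hWmean, ?_⟩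
  intro n
  have hport : port (fun _ : Fin 1 => W) (fun _ => ((n:ℝ)+1)) = scale ((n:ℝ)+1) W := by
    funext ω; simp [port, scale, Fin.sum_univ_one]
  constructor
  · rw [hport]; exact hRW _ (by linarith [Nat.cast_nonneg (α := ℝ) n])
  · rw [hport]
    simp only [scale]
    exact integral_const_mul _ _

lemma sens_wellposed (μ : Measure Ω) [IsProbabilityMeasure μ]
    {R : (Ω → ℝ) → EReal} (hR : IsRisk μ R) (hps : PosStarShaped μ R)
    (hlf : LowerFatou μ R) (hsens : SensLLRisk μ R) {d : ℕ}
    (X : Fin d → Ω → ℝ) (hM : IsMarket μ X) (Rt : ℝ) (hRt : 0 ≤ Rt) :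
    ∃ πs : Fin d → ℝ, R (port X πs) ≤ (Rt : EReal) ∧
      ∀ π : Fin d → ℝ, R (port X π) ≤ (Rt : EReal) →
        ∫ ω, port X π ω ∂μ ≤ ∫ ω, port X πs ω ∂μ := by
  classical
  have hXi := hM.integrable
  set K : Set (Fin d → ℝ) := {π | R (port X π) ≤ (Rt : EReal)} with hKdef
  have hzero : (0 : Fin d → ℝ) ∈ K := by
    have hp0 : port X (0 : Fin d → ℝ) = fun _ => (0:ℝ) := by funext ω; simp [port]
    show R (port X 0) ≤ (Rt : EReal)
    rw [hp0, hR.norm]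
    exact_mod_cast hRt
  have hsp : ∀ (l : ℝ) (τ : Fin d → ℝ), scale l (port X τ) = port X (l • τ) := by
    intro l τ; funext ω
    simp [scale, port, Finset.mul_sum, mul_assoc]
  have hdom : ∀ (C : ℝ) (π : Fin d → ℝ), ‖π‖ ≤ C → ∀ ω,
      |port X π ω| ≤ C * ∑ i, |X i ω| := by
    intro C π hC ω
    calc |port X π ω| ≤ ∑ i, |π i * X i ω| := Finset.abs_sum_le_sum_abs _ _
    _ ≤ ∑ i, C * |X i ω| := by
        refine Finset.sum_le_sum fun i _ => ?_
        rw [abs_mul]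
        exact mul_le_mul_of_nonneg_right
          (le_trans (norm_le_pi_norm π i) hC) (abs_nonneg _)
    _ = C * ∑ i, |X i ω| := by rw [Finset.mul_sum]
  have hZint : ∀ C : ℝ, Integrable (fun ω => C * ∑ i, |X i ω|) μ :=
    fun C => (integrable_finset_sum _ (fun i _ => (hXi i).abs)).const_mul C
  have hconv : ∀ (πn : ℕ → Fin d → ℝ) (π : Fin d → ℝ),
      Tendsto πn atTop (nhds π) → ∀ ω,
      Tendsto (fun n => port X (πn n) ω) atTop (nhds (port X π ω)) := by
    intro πn π h ω
    have h2 := tendsto_pi_nhds.mp h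
    exact tendsto_finset_sum _ fun i _ => ((h2 i).mul_const (X i ω))
  have hclosed : IsClosed K := by
    refine IsSeqClosed.isClosed ?_
    intro πn π hmem hlim
    obtain ⟨C, hC⟩ := ((continuous_norm.tendsto π).comp hlim).bddAbove_range
    have hC' : ∀ n, ‖πn n‖ ≤ C := fun n => hC ⟨n, rfl⟩
    have hfatou := hlf (fun n => port X (πn n)) (port X π) (fun ω => C * ∑ i, |X i ω|)
      (fun n => integrable_port hXi _) (integrable_port hXi π) (hZint C)
      (Filter.Eventually.of_forall (hconv πn π hlim))
      (fun n => Filter.Eventually.of_forall (hdom C (πn n) (hC' n) ))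
    refine le_trans hfatou (le_trans (liminf_le_liminf (Filter.Eventually.of_forall hmem)) ?_)
    rw [liminf_const]
  have hbound : Bornology.IsBounded K := by
    rw [isBounded_iff_forall_norm_le]
    by_contra hub
    push_neg at hub
    choose f hfK hfn using fun n : ℕ => hub (n : ℝ)
    have hfpos : ∀ n, (0:ℝ) < ‖f n‖ := fun n => lt_of_le_of_lt (Nat.cast_nonneg n) (hfn n)
    set σn : ℕ → Fin d → ℝ := fun n => ‖f n‖⁻¹ • f n with hσndef
    have hσsph : ∀ n, σn n ∈ Metric.sphere (0 : Fin d → ℝ) 1 := by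
      intro n
      rw [mem_sphere_zero_iff_norm]
      rw [hσndef]
      simp only [norm_smul, norm_inv, norm_norm]
      exact inv_mul_cancel₀ (hfpos n).ne'
    obtain ⟨σ, hσsph', φ, hφ, hσlim⟩ :=
      (isCompact_sphere (0 : Fin d → ℝ) 1).tendsto_subseq hσsph
    have hσnorm : ‖σ‖ = 1 := mem_sphere_zero_iff_norm.mp hσsph'
    have hσne : σ ≠ 0 := by
      intro h; rw [h] at hσnorm; simp at hσnorm
    have hμneg : 0 < μ {ω | port X σ ω < 0} := by
      rcases eq_or_ne (μ {ω | port X σ ω < 0}) 0 with h0 | h0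
      · exfalso
        have hge : ∀ᵐ ω ∂μ, 0 ≤ port X σ ω := by
          rw [ae_iff]
          convert h0 using 2
          ext ω; simp [not_le]
        rcases eq_or_ne (μ {ω | 0 < port X σ ω}) 0 with h1 | h1
        · have hle : ∀ᵐ ω ∂μ, port X σ ω ≤ 0 := by
            rw [ae_iff]
            convert h1 using 2
            ext ω; simp [not_le]
          have heq : ∀ᵐ ω ∂μ, port X σ ω = 0 := by
            filter_upwards [hge, hle] with ω ha hb; linarith
          exact hσne (hM.nonredundant σ heq)
        · exact hM.no_arbitrage ⟨σ, hge, pos_iff_ne_zero.mpr h1⟩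
      · exact pos_iff_ne_zero.mpr h0
    obtain ⟨l₀, hl₀, hsl⟩ := hsens (port X σ) (integrable_port hXi σ) hμneg
    obtain ⟨l₂, hl₂pos, hl₂⟩ : ∃ l₂ : ℝ, 0 < l₂ ∧ (Rt : EReal) < R (scale l₂ (port X σ)) := by
      have hc1 : 0 < R (scale (l₀ + 1) (port X σ)) := hsl _ (lt_add_one l₀)
      have hint1 : Integrable (scale (l₀+1) (port X σ)) μ :=
        (integrable_port hXi σ).const_mul _
      rcases eq_or_ne (R (scale (l₀ + 1) (port X σ))) ⊤ with htop | htop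
      · exact ⟨l₀ + 1, by linarith, by rw [htop]; exact EReal.coe_lt_top Rt⟩
      · have hbot : R (scale (l₀ + 1) (port X σ)) ≠ ⊥ := hR.ne_bot _ hint1
        set c' := (R (scale (l₀ + 1) (port X σ))).toReal with hc'def
        have hcoe : R (scale (l₀ + 1) (port X σ)) = (c' : EReal) :=
          (EReal.coe_toReal htop hbot).symm
        have hc'pos : 0 < c' := by
          rw [hcoe] at hc1; exact_mod_cast hc1
        set lam := max 2 ((Rt+1)/c') with hlamdef
        have hlam1 : 1 < lam := lt_of_lt_of_le one_lt_two (le_max_left _ _)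
        have hstar := hps (scale (l₀ + 1) (port X σ)) hint1 lam hlam1
        have hss : scale lam (scale (l₀+1) (port X σ)) = scale (lam * (l₀+1)) (port X σ) := by
          funext ω; simp [scale, mul_assoc]
        rw [hss, hcoe, ← EReal.coe_mul] at hstar
        refine ⟨lam * (l₀ + 1), by nlinarith, lt_of_lt_of_le ?_ hstar⟩
        have h1 : Rt + 1 ≤ lam * c' := by
          have := le_max_right 2 ((Rt+1)/c')
          calc Rt + 1 = ((Rt+1)/c') * c' := by field_simp
          _ ≤ lam * c' := by nlinarith
        exact_mod_cast (by linarith : Rt < lam * c')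
    set Yn : ℕ → Ω → ℝ := fun n => scale l₂ (port X (σn (φ n))) with hYndef
    have hYnint : ∀ n, Integrable (Yn n) μ := fun n => (integrable_port hXi _).const_mul _
    have hYtend : ∀ ω, Tendsto (fun n => Yn n ω) atTop (nhds (scale l₂ (port X σ) ω)) := by
      intro ω
      exact (hconv (fun n => σn (φ n)) σ hσlim ω).const_mul l₂
    have hYdom : ∀ n, ∀ ω, |Yn n ω| ≤ l₂ * ∑ i, |X i ω| := by
      intro n ω
      have h1 : Yn n ω = port X (l₂ • σn (φ n)) ω := by rw [hYndef, ← hsp]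
      rw [h1]
      refine hdom l₂ _ ?_ ω
      rw [norm_smul, mem_sphere_zero_iff_norm.mp (hσsph (φ n))]
      simp [abs_of_pos hl₂pos]
    have hfatou := hlf Yn (scale l₂ (port X σ)) (fun ω => l₂ * ∑ i, |X i ω|)
      hYnint ((integrable_port hXi σ).const_mul _) (hZint l₂)
      (Filter.Eventually.of_forall hYtend)
      (fun n => Filter.Eventually.of_forall (hYdom n))
    have hev : ∀ᶠ n in atTop, (Rt : EReal) < R (Yn n) :=
      Filter.eventually_lt_of_lt_liminf (lt_of_lt_of_le hl₂ hfatou)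
    obtain ⟨n₀, hn₀⟩ := Filter.eventually_atTop.mp hev
    set n := max n₀ (⌈l₂⌉₊ + 1) with hndef
    have hRn : (Rt : EReal) < R (Yn n) := hn₀ n (le_max_left _ _)
    have hln : l₂ < ‖f (φ n)‖ := by
      have h1 : (n : ℝ) ≤ (φ n : ℝ) := by exact_mod_cast hφ.le_apply
      have h2 : l₂ ≤ (⌈l₂⌉₊ : ℝ) := Nat.le_ceil l₂
      have h3 : ((⌈l₂⌉₊ + 1 : ℕ) : ℝ) ≤ (n : ℝ) := by
        exact_mod_cast le_max_right n₀ (⌈l₂⌉₊ + 1)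
      have h4 := hfn (φ n)
      push_cast at h3
      linarith
    set p := f (φ n) with hpdef
    have hpnorm : (0:ℝ) < ‖p‖ := hfpos (φ n)
    set lam' := ‖p‖ / l₂ with hlam'def
    have hlam'1 : 1 < lam' := (one_lt_div hl₂pos).mpr hln
    have hpY : scale lam' (Yn n) = port X p := by
      have h1 : scale lam' (Yn n) = scale (lam' * l₂) (port X (σn (φ n))) := by
        funext ω; simp [Yn, scale, mul_assoc]
      rw [h1, hsp]
      have h2 : lam' * l₂ = ‖p‖ := div_mul_cancel₀ _ hl₂pos.ne'
      rw [h2]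
      have h3 : ‖p‖ • σn (φ n) = p := by
        rw [hσndef]
        rw [smul_smul, mul_inv_cancel₀ hpnorm.ne', one_smul]
      rw [h3]
    have hstar := hps (Yn n) (hYnint n) lam' hlam'1
    rw [hpY] at hstar
    have hfeas : R (port X p) ≤ (Rt : EReal) := hfK (φ n)
    have hgt : (Rt : EReal) < (lam' : EReal) * R (Yn n) := by
      rcases eq_or_ne (R (Yn n)) ⊤ with htop | htop
      · rw [htop, EReal.mul_top_of_pos]
        · exact EReal.coe_lt_top Rt
        · exact_mod_cast lt_trans one_pos hlam'1
      · have hbot : R (Yn n) ≠ ⊥ := hR.ne_bot _ (hYnint n)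
        set c := (R (Yn n)).toReal with hcdef
        have hcoe : R (Yn n) = (c : EReal) := (EReal.coe_toReal htop hbot).symm
        have hRtc : Rt < c := by
          rw [hcoe] at hRn; exact_mod_cast hRn
        rw [hcoe, ← EReal.coe_mul]
        have : Rt < lam' * c := by nlinarith
        exact_mod_cast this
    exact absurd (le_trans hstar hfeas) (not_le.mpr hgt)
  have hcompact : IsCompact K := Metric.isCompact_of_isClosed_isBounded hclosed hbound
  set F : (Fin d → ℝ) → ℝ := fun π => ∑ i, π i * ∫ ω, X i ω ∂μ with hFdef
  have hF : ∀ π : Fin d → ℝ, ∫ ω, port X π ω ∂μ = F π := by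
    intro π
    rw [show (fun ω => port X π ω) = fun ω => ∑ i, π i * X i ω from rfl]
    rw [integral_finset_sum _ (fun i _ => (hXi i).const_mul (π i))]
    exact Finset.sum_congr rfl fun i _ => integral_const_mul _ _
  have hFc : Continuous F :=
    continuous_finset_sum _ fun i _ => (continuous_apply i).mul continuous_const
  obtain ⟨πs, hπsK, hmaxon⟩ := hcompact.exists_isMaxOn ⟨0, hzero⟩ hFc.continuousOn
  exact ⟨πs, hπsK, fun π hπ => by rw [hF, hF]; exact hmaxon hπ⟩


/-- for the mean functional and a positively star-shaped risk functional
`R` with the lower Fatou property, the Markowitz-type problem admits a maximizer for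
every market and every `R̃ ≥ 0` iff `R` is sensitive to large losses; likewise the
supremum is finite for every market and every `R̃ ≥ 0` iff `R` is sensitive to large
losses. -/
theorem stmt10 {Ω : Type*} [MeasurableSpace Ω] (μ : Measure Ω) [IsProbabilityMeasure μ]
    (hatomless : Atomless μ)
    (R : (Ω → ℝ) → EReal) (hR : IsRisk μ R)
    (hps : PosStarShaped μ R) (hlf : LowerFatou μ R) :
    ((∀ (d : ℕ), 0 < d → ∀ X : Fin d → Ω → ℝ, IsMarket μ X →
        ∀ Rt : ℝ, 0 ≤ Rt →
          ∃ πs : Fin d → ℝ, R (port X πs) ≤ (Rt : EReal) ∧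
            ∀ π : Fin d → ℝ, R (port X π) ≤ (Rt : EReal) →
              ∫ ω, port X π ω ∂μ ≤ ∫ ω, port X πs ω ∂μ) ↔
      SensLLRisk μ R) ∧
    ((∀ (d : ℕ), 0 < d → ∀ X : Fin d → Ω → ℝ, IsMarket μ X →
        ∀ Rt : ℝ, 0 ≤ Rt →
          (⨆ π : {π : Fin d → ℝ // R (port X π) ≤ (Rt : EReal)},
            ((∫ ω, port X π.1 ω ∂μ : ℝ) : EReal)) < ⊤) ↔
      SensLLRisk μ R) := by
  constructor
  · constructor
    · intro h Y hY hneg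
      by_contra hcon
      push_neg at hcon
      obtain ⟨X, hX, e, he, hprop⟩ := not_sens_bad_market μ hatomless hR hps hY hneg hcon
      obtain ⟨πs, hπs, hopt⟩ := h 1 one_pos X hX 0 le_rfl
      obtain ⟨n, hn⟩ := exists_nat_gt ((∫ ω, port X πs ω ∂μ) / e)
      have h3 : ((n:ℝ)+1) * e ≤ ∫ ω, port X πs ω ∂μ := by
        rw [← (hprop n).2]
        exact hopt _ (by exact_mod_cast (hprop n).1)
      have h4 : (∫ ω, port X πs ω ∂μ) < n * e := (div_lt_iff₀ he).mp hn
      nlinarith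
    · intro hs d hd X hX Rt hRt
      exact sens_wellposed μ hR hps hlf hs X hX Rt hRt
  · constructor
    · intro h Y hY hneg
      by_contra hcon
      push_neg at hcon
      obtain ⟨X, hX, e, he, hprop⟩ := not_sens_bad_market μ hatomless hR hps hY hneg hcon
      have hsup := h 1 one_pos X hX 0 le_rfl
      set S := ⨆ π : {π : Fin 1 → ℝ // R (port X π) ≤ ((0:ℝ) : EReal)},
        ((∫ ω, port X π.1 ω ∂μ : ℝ) : EReal) with hSdef
      have hmem : ∀ n : ℕ, ((((n:ℝ)+1)*e : ℝ) : EReal) ≤ S := by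
        intro n
        have hval := le_iSup (fun π : {π : Fin 1 → ℝ // R (port X π) ≤ ((0:ℝ) : EReal)} =>
          ((∫ ω, port X π.1 ω ∂μ : ℝ) : EReal))
          ⟨fun _ => (n:ℝ)+1, by exact_mod_cast (hprop n).1⟩
        rw [(hprop n).2] at hval
        exact hval
      have hSnb : S ≠ ⊥ := (lt_of_lt_of_le (EReal.bot_lt_coe _) (hmem 0)).ne'
      have hle : ∀ n : ℕ, ((n:ℝ)+1)*e ≤ S.toReal := by
        intro n
        have h1 := hmem n
        rw [← EReal.coe_toReal hsup.ne hSnb] at h1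
        exact_mod_cast h1
      obtain ⟨n, hn⟩ := exists_nat_gt (S.toReal / e)
      have h4 : S.toReal < n * e := (div_lt_iff₀ he).mp hn
      have h5 := hle n
      nlinarith
    · intro hs d hd X hX Rt hRt
      obtain ⟨πs, hπs, hopt⟩ := sens_wellposed μ hR hps hlf hs X hX Rt hRt
      refine lt_of_le_of_lt (iSup_le ?_) (EReal.coe_lt_top (∫ ω, port X πs ω ∂μ))
      rintro ⟨π, hπ⟩
      exact_mod_cast hopt π hπ

end URPaper
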